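/- For a signed permutation w ∈ W_n and 1 ≤ k ≤ n-1, w lies in the domain D^k_{SC}(W_n) of the operator T^k_{SC} if and only if |w(1)| > |w(2)| > ... > |w(k+1)|. -/

import Mathlib

/-- The signed transposition `s_j` of type `B`: swaps `j ↔ j+1` and `-j ↔ -(j+1)`. -/
def sgen (j : ℕ) : Equiv.Perm ℤ :=
  Equiv.swap (j : ℤ) ((j : ℤ) + 1) * Equiv.swap (-(j : ℤ)) (-((j : ℤ) + 1))

/-- The sign change `t_j`: swaps `j ↔ -j`, i.e. changes the sign of the `j`-th entry. -/
def tgen (j : ℕ) : Equiv.Perm ℤ := Equiv.swap (j : ℤ) (-(j : ℤ))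

/-- The hyperoctahedral group `W_n`: permutations `w` of `{±1, …, ±n}` with `w(-i) = -w(i)`,
realized as permutations of `ℤ` commuting with negation and fixing `i` with `|i| > n`. -/
def Wgrp (n : ℕ) : Set (Equiv.Perm ℤ) :=
  {w | (∀ i : ℤ, w (-i) = - w i) ∧ ∀ i : ℤ, (n : ℤ) < |i| → w i = i}

/-- Coxeter length on `W_n` with respect to the simple reflections
`s_1, …, s_{n-1}, t_1`: minimal length of a word in these generators. -/
noncomputable def lenB (n : ℕ) (w : Equiv.Perm ℤ) : ℕ :=
  sInf {k | ∃ l : List (Equiv.Perm ℤ), l.length = k ∧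
    (∀ g ∈ l, (∃ j : ℕ, 1 ≤ j ∧ j < n ∧ g = sgen j) ∨ g = tgen 1) ∧ l.prod = w}

/-- `α_{i+1} ∈ τ^k(w)`, i.e. `ℓ(w s_i) < ℓ(w)` where `s_i = s_{α_{i+1}}`. -/
noncomputable def InTauS (n i : ℕ) (w : Equiv.Perm ℤ) : Prop :=
  lenB n (w * sgen i) < lenB n w

/-- `α'_i ∈ τ^k(w)`, i.e. `ℓ(w t_i) < ℓ(w)` where `t_i = s_{α'_i}`. -/
noncomputable def InTauT (n i : ℕ) (w : Equiv.Perm ℤ) : Prop :=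
  lenB n (w * tgen i) < lenB n w

/-!
The Coxeter length of `w ∈ W_n` is the statistic
`inv(w) + #{a < b | w a + w b < 0} + #{a | w a < 0}` (`lengthB`): right multiplication by a
simple reflection changes it by exactly one, and every `w ≠ 1` has a descent (`w 1 < 0` or
`w (j + 1) < w j`), so it equals the minimal word length. Hence `α_{i+1} ∈ τ(w)` iff
`w (i + 1) < w i`, and `α'_i ∈ τ(w)` iff `w i < 0`, because changing the sign of a positive entry
never decreases a pair term and adds a negative entry. Since `w t_i` has the entries `-w i`,
`w (i + 1)` in positions `i`, `i + 1`, the condition at index `i` becomes a condition on the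
signs of `w i` and `w (i + 1) ± w i`, which holds exactly when `|w (i + 1)| < |w i|`.
-/

open Finset

lemma sgen_apply {j : ℕ} (hj : 1 ≤ j) (x : ℤ) :
    sgen j x = if x = j then (j : ℤ) + 1 else if x = (j : ℤ) + 1 then j else
      if x = -(j : ℤ) then -((j : ℤ) + 1) else if x = -((j : ℤ) + 1) then -(j : ℤ) else x := by
  simp only [sgen, Equiv.Perm.mul_apply, Equiv.swap_apply_def]
  split_ifs <;> omega

lemma sgen_apply_of_pos {j : ℕ} (hj : 1 ≤ j) {x : ℤ} (hx : 1 ≤ x) :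
    sgen j x = Equiv.swap (j : ℤ) ((j : ℤ) + 1) x := by
  rw [sgen_apply hj, Equiv.swap_apply_def]
  split_ifs <;> omega

lemma sgen_mul_self {j : ℕ} (hj : 1 ≤ j) : sgen j * sgen j = 1 := by
  ext x
  simp only [Equiv.Perm.mul_apply, sgen_apply hj, Equiv.Perm.one_apply]
  split_ifs <;> omega

lemma tgen_mul_self (i : ℕ) : tgen i * tgen i = 1 := Equiv.swap_mul_self _ _

lemma mul_tgen_apply_of_ne {i : ℕ} (w : Equiv.Perm ℤ) {x : ℤ} (h₁ : x ≠ i) (h₂ : x ≠ -(i : ℤ)) :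
    (w * tgen i) x = w x := by
  rw [Equiv.Perm.mul_apply, tgen, Equiv.swap_apply_of_ne_of_ne h₁ h₂]

section Wgrp

variable {n : ℕ} {w v : Equiv.Perm ℤ}

lemma mul_mem_Wgrp (hw : w ∈ Wgrp n) (hv : v ∈ Wgrp n) : w * v ∈ Wgrp n :=
  ⟨fun i => by simp only [Equiv.Perm.mul_apply, hv.1 i, hw.1 (v i)],
    fun i hi => by simp only [Equiv.Perm.mul_apply, hv.2 i hi, hw.2 i hi]⟩

lemma sgen_mem_Wgrp {j : ℕ} (hj : 1 ≤ j) (hjn : j < n) : sgen j ∈ Wgrp n := by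
  refine ⟨fun i => ?_, fun i hi => ?_⟩
  · rw [sgen_apply hj, sgen_apply hj]
    split_ifs <;> omega
  · rw [sgen_apply hj]
    rcases abs_cases i with ⟨_, _⟩ | ⟨_, _⟩ <;> split_ifs <;> omega

lemma tgen_mem_Wgrp {i : ℕ} (hin : i ≤ n) : tgen i ∈ Wgrp n := by
  refine ⟨fun x => ?_, fun x hx => ?_⟩
  · simp only [tgen, Equiv.swap_apply_def]
    split_ifs <;> omega
  · simp only [tgen, Equiv.swap_apply_def]
    rcases abs_cases x with ⟨_, _⟩ | ⟨_, _⟩ <;> split_ifs <;> omega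

lemma Wgrp_apply_zero (hw : w ∈ Wgrp n) : w 0 = 0 := by
  have := hw.1 0
  rw [neg_zero] at this
  omega

lemma Wgrp_apply_ne_zero (hw : w ∈ Wgrp n) {x : ℤ} (hx : x ≠ 0) : w x ≠ 0 := by
  rw [← Wgrp_apply_zero hw]
  exact w.injective.ne hx

lemma Wgrp_apply_ne_neg (hw : w ∈ Wgrp n) {x y : ℤ} (h : x ≠ -y) : w x ≠ -w y := by
  rw [← hw.1 y]
  exact w.injective.ne h

lemma mul_tgen_apply_self (hw : w ∈ Wgrp n) (i : ℕ) : (w * tgen i) i = -w i := by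
  rw [Equiv.Perm.mul_apply, tgen, Equiv.swap_apply_left, hw.1]

end Wgrp

noncomputable def posPairs (n : ℕ) : Finset (ℤ × ℤ) :=
  (Icc 1 (n : ℤ) ×ˢ Icc 1 (n : ℤ)).filter fun p => p.1 < p.2

noncomputable def pairInv (w : Equiv.Perm ℤ) (p : ℤ × ℤ) : ℕ :=
  (if w p.2 < w p.1 then 1 else 0) + (if w p.1 + w p.2 < 0 then 1 else 0)

noncomputable def pairCount (n : ℕ) (w : Equiv.Perm ℤ) : ℕ := ∑ p ∈ posPairs n, pairInv w p

noncomputable def negCount (n : ℕ) (w : Equiv.Perm ℤ) : ℕ :=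
  ∑ a ∈ Icc 1 (n : ℤ), if w a < 0 then 1 else 0

noncomputable def lengthB (n : ℕ) (w : Equiv.Perm ℤ) : ℕ := pairCount n w + negCount n w

lemma lengthB_one (n : ℕ) : lengthB n 1 = 0 := by
  have hpair : pairCount n 1 = 0 := sum_eq_zero fun p hp => by
    simp only [posPairs, mem_filter, mem_product, mem_Icc] at hp
    have : ¬ p.2 < p.1 ∧ ¬ p.1 + p.2 < 0 := by omega
    simp [pairInv, this]
  have hneg : negCount n 1 = 0 := sum_eq_zero fun a ha => by
    rw [mem_Icc] at ha
    simp [show ¬ a < 0 by omega]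
  rw [lengthB, hpair, hneg]

section sgen

variable {n j : ℕ} (hj : 1 ≤ j)
include hj

lemma insert_map_swap_posPairs (hjn : j < n) :
    insert ((j : ℤ), (j : ℤ) + 1)
        ((posPairs n).map
          (Equiv.swap (j : ℤ) (j + 1) |>.prodCongr (Equiv.swap (j : ℤ) (j + 1))).toEmbedding) =
      insert ((j : ℤ) + 1, (j : ℤ)) (posPairs n) := by
  ext ⟨a, b⟩
  simp only [mem_insert, mem_map_equiv, Equiv.prodCongr_symm, Equiv.symm_swap,
    Equiv.prodCongr_apply, Prod.map, posPairs, mem_filter, mem_product, mem_Icc, Prod.mk.injEq,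
    Equiv.swap_apply_def]
  split_ifs <;> omega

lemma pairCount_mul_sgen_add (hjn : j < n) (w : Equiv.Perm ℤ) :
    pairCount n (w * sgen j) + pairInv w ((j : ℤ), (j : ℤ) + 1) =
      pairCount n w + pairInv w ((j : ℤ) + 1, (j : ℤ)) := by
  set σ := Equiv.swap (j : ℤ) (j + 1)
  have hσ : pairCount n (w * sgen j) =
      ∑ p ∈ (posPairs n).map (σ.prodCongr σ).toEmbedding, pairInv w p := by
    rw [sum_map, pairCount]
    refine sum_congr rfl fun p hp => ?_
    simp only [posPairs, mem_filter, mem_product, mem_Icc] at hp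
    simp only [pairInv, Equiv.Perm.mul_apply, sgen_apply_of_pos hj hp.1.1.1,
      sgen_apply_of_pos hj hp.1.2.1, Equiv.coe_toEmbedding, Equiv.prodCongr_apply, Prod.map]
    rfl
  have hnot_map : ((j : ℤ), (j : ℤ) + 1) ∉ (posPairs n).map (σ.prodCongr σ).toEmbedding := by
    simp [σ, posPairs]
  have hnot_pos : ((j : ℤ) + 1, (j : ℤ)) ∉ posPairs n := by
    simp [posPairs]
  rw [hσ, add_comm, ← sum_insert hnot_map, insert_map_swap_posPairs hj hjn, sum_insert hnot_pos,
    add_comm, pairCount]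

lemma negCount_mul_sgen (hjn : j < n) (w : Equiv.Perm ℤ) :
    negCount n (w * sgen j) = negCount n w := by
  refine sum_equiv (Equiv.swap (j : ℤ) (j + 1)) (fun a => ?_) fun a ha => ?_
  · simp only [mem_Icc, Equiv.swap_apply_def]
    split_ifs <;> omega
  · rw [Equiv.Perm.mul_apply, sgen_apply_of_pos hj (mem_Icc.mp ha).1]

lemma lengthB_mul_sgen_of_lt {w : Equiv.Perm ℤ} (hjn : j < n) (h : w j < w (j + 1)) :
    lengthB n (w * sgen j) = lengthB n w + 1 := by
  have := pairCount_mul_sgen_add hj hjn w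
  simp only [pairInv] at this
  rw [lengthB, lengthB, negCount_mul_sgen hj hjn]
  split_ifs at this <;> omega

lemma lengthB_mul_sgen_of_gt {w : Equiv.Perm ℤ} (hjn : j < n) (h : w (j + 1) < w j) :
    lengthB n w = lengthB n (w * sgen j) + 1 := by
  have := lengthB_mul_sgen_of_lt hj hjn (w := w * sgen j) (by
    simpa only [Equiv.Perm.mul_apply, sgen_apply_of_pos hj (by omega : (1 : ℤ) ≤ j),
      sgen_apply_of_pos hj (by omega : (1 : ℤ) ≤ j + 1), Equiv.swap_apply_left,
      Equiv.swap_apply_right] using h)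
  rwa [mul_assoc, sgen_mul_self hj, mul_one] at this

end sgen

section tgen

variable {n i : ℕ} {w : Equiv.Perm ℤ} (hw : w ∈ Wgrp n)
include hw

lemma mul_tgen_apply_of_pos {x : ℤ} (hx : 1 ≤ x) :
    (w * tgen i) x = if x = i then -w i else w x := by
  split_ifs with h
  · rw [h, mul_tgen_apply_self hw]
  · exact mul_tgen_apply_of_ne w h (by omega)

lemma pairInv_mul_tgen_of_ne {p : ℤ × ℤ} (hp₁ : 1 ≤ p.1) (hp₂ : 1 ≤ p.2) (h : p.2 ≠ i) :
    pairInv (w * tgen i) p = pairInv w p := by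
  obtain ⟨a, b⟩ := p
  simp only [pairInv, mul_tgen_apply_of_pos hw hp₁, mul_tgen_apply_of_pos hw hp₂]
  split_ifs <;> subst_vars <;> omega

lemma pairInv_le_mul_tgen (h : 0 < w i) {p : ℤ × ℤ} (hp₁ : 1 ≤ p.1) (hp₂ : 1 ≤ p.2) :
    pairInv w p ≤ pairInv (w * tgen i) p := by
  obtain ⟨a, b⟩ := p
  simp only [pairInv, mul_tgen_apply_of_pos hw hp₁, mul_tgen_apply_of_pos hw hp₂]
  split_ifs <;> subst_vars <;> omega

lemma negCount_mul_tgen (hi : 1 ≤ i) (hin : i ≤ n) (h : 0 < w i) :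
    negCount n (w * tgen i) = negCount n w + 1 := by
  have hmem : (i : ℤ) ∈ Icc 1 (n : ℤ) := mem_Icc.mpr ⟨by omega, by omega⟩
  have hrest : ∑ a ∈ (Icc 1 (n : ℤ)).erase (i : ℤ), (if (w * tgen i) a < 0 then 1 else 0) =
      ∑ a ∈ (Icc 1 (n : ℤ)).erase (i : ℤ), if w a < 0 then 1 else 0 :=
    sum_congr rfl fun a ha => by
      rw [mem_erase, mem_Icc] at ha
      rw [mul_tgen_apply_of_pos hw ha.2.1, if_neg ha.1]
  rw [negCount, negCount, ← add_sum_erase _ _ hmem, ← add_sum_erase _ _ hmem, hrest,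
    mul_tgen_apply_self hw, if_pos (by omega), if_neg (by omega), zero_add, add_comm]

lemma lengthB_lt_mul_tgen (hi : 1 ≤ i) (hin : i ≤ n) (h : 0 < w i) :
    lengthB n w < lengthB n (w * tgen i) := by
  have hpair : pairCount n w ≤ pairCount n (w * tgen i) := sum_le_sum fun p hp => by
    simp only [posPairs, mem_filter, mem_product, mem_Icc] at hp
    exact pairInv_le_mul_tgen hw h hp.1.1.1 hp.1.2.1
  rw [lengthB, lengthB, negCount_mul_tgen hw hi hin h]
  omega

lemma lengthB_mul_tgen_one (hn : 1 ≤ n) (h : 0 < w 1) :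
    lengthB n (w * tgen 1) = lengthB n w + 1 := by
  have hpair : pairCount n (w * tgen 1) = pairCount n w := sum_congr rfl fun p hp => by
    simp only [posPairs, mem_filter, mem_product, mem_Icc] at hp
    exact pairInv_mul_tgen_of_ne hw hp.1.1.1 hp.1.2.1 (by omega)
  rw [lengthB, lengthB, hpair, negCount_mul_tgen hw le_rfl hn (by exact_mod_cast h), add_assoc]

lemma lengthB_mul_tgen_one_of_neg (hn : 1 ≤ n) (h : w 1 < 0) :
    lengthB n w = lengthB n (w * tgen 1) + 1 := by
  have hw' := mul_mem_Wgrp hw (tgen_mem_Wgrp hn)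
  have h₁ : (w * tgen 1) 1 = -w 1 := by exact_mod_cast mul_tgen_apply_self hw 1
  have := lengthB_mul_tgen_one hw' hn (by omega)
  rwa [mul_assoc, tgen_mul_self, mul_one] at this

end tgen

lemma eq_one_of_forall_lt_succ {n : ℕ} {w : Equiv.Perm ℤ} (hw : w ∈ Wgrp n) (h₁ : 0 < w 1)
    (hmono : ∀ a : ℤ, 1 ≤ a → a < n → w a < w (a + 1)) : w = 1 := by
  have hbound : ∀ a : ℤ, a ≤ n → w a ≤ n := fun a ha => by
    by_contra! h
    have := w.injective (hw.2 (w a) (by rw [abs_of_pos (by omega)]; exact h))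
    omega
  have hge : ∀ a : ℤ, 1 ≤ a → a ≤ n → a ≤ w a := by
    intro a ha
    induction a, ha using Int.leInduction with
    | base => intro; omega
    | succ a ha ih =>
      intro h
      have := hmono a ha (by omega)
      have := ih (by omega)
      omega
  have hle : ∀ a : ℤ, a ≤ n → 1 ≤ a → w a ≤ a := by
    intro a ha
    induction a, ha using Int.leInductionDown with
    | base => intro; exact hbound n le_rfl
    | pred a ha ih =>
      intro h
      have hstep := hmono (a - 1) h (by omega)
      rw [sub_add_cancel] at hstep
      have := ih (by omega)
      omega
  ext x
  simp only [Equiv.Perm.one_apply]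
  by_cases hx : (n : ℤ) < |x|
  · exact hw.2 x hx
  rw [not_lt, abs_le] at hx
  rcases lt_trichotomy x 0 with hneg | rfl | hpos
  · have := hw.1 (-x)
    rw [neg_neg] at this
    have := hge (-x) (by omega) (by omega)
    have := hle (-x) (by omega) (by omega)
    omega
  · exact Wgrp_apply_zero hw
  · exact le_antisymm (hle x hx.2 hpos) (hge x hpos hx.2)

def IsSimpleReflection (n : ℕ) (g : Equiv.Perm ℤ) : Prop :=
  (∃ j : ℕ, 1 ≤ j ∧ j < n ∧ g = sgen j) ∨ g = tgen 1

section length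

variable {n : ℕ} {w g : Equiv.Perm ℤ}

lemma IsSimpleReflection.mul_self (hg : IsSimpleReflection n g) : g * g = 1 := by
  rcases hg with ⟨j, hj, -, rfl⟩ | rfl
  · exact sgen_mul_self hj
  · exact tgen_mul_self 1

lemma IsSimpleReflection.mem_Wgrp (hn : 1 ≤ n) (hg : IsSimpleReflection n g) : g ∈ Wgrp n := by
  rcases hg with ⟨j, hj, hjn, rfl⟩ | rfl
  · exact sgen_mem_Wgrp hj hjn
  · exact tgen_mem_Wgrp hn

lemma lengthB_mul_le (hn : 1 ≤ n) (hw : w ∈ Wgrp n) (hg : IsSimpleReflection n g) :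
    lengthB n (w * g) ≤ lengthB n w + 1 := by
  rcases hg with ⟨j, hj, hjn, rfl⟩ | rfl
  · rcases lt_or_gt_of_ne (w.injective.ne (by omega : (j : ℤ) ≠ j + 1)) with h | h
    · exact (lengthB_mul_sgen_of_lt hj hjn h).le
    · have := lengthB_mul_sgen_of_gt hj hjn h
      omega
  · rcases lt_or_gt_of_ne (Wgrp_apply_ne_zero hw one_ne_zero) with h | h
    · have := lengthB_mul_tgen_one_of_neg hw hn h
      omega
    · exact (lengthB_mul_tgen_one hw hn h).le

lemma exists_isSimpleReflection_lengthB_mul (hn : 1 ≤ n) (hw : w ∈ Wgrp n) (hne : w ≠ 1) :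
    ∃ g, IsSimpleReflection n g ∧ lengthB n (w * g) + 1 = lengthB n w := by
  by_cases h₁ : w 1 < 0
  · exact ⟨tgen 1, Or.inr rfl, (lengthB_mul_tgen_one_of_neg hw hn h₁).symm⟩
  obtain ⟨a, ha, han, hdesc⟩ : ∃ a : ℤ, 1 ≤ a ∧ a < n ∧ w (a + 1) < w a := by
    by_contra! hmono
    refine hne (eq_one_of_forall_lt_succ hw ?_ fun a ha han => ?_)
    · have := Wgrp_apply_ne_zero hw one_ne_zero
      omega
    · exact (hmono a ha han).lt_of_ne (w.injective.ne (by omega))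
  lift a to ℕ using (by omega)
  exact ⟨sgen a, Or.inl ⟨a, by omega, by omega, rfl⟩,
    (lengthB_mul_sgen_of_gt (by omega) (by omega) hdesc).symm⟩

lemma exists_word_length_eq_lengthB (hn : 1 ≤ n) (hw : w ∈ Wgrp n) :
    ∃ l : List (Equiv.Perm ℤ), l.length = lengthB n w ∧
      (∀ g ∈ l, IsSimpleReflection n g) ∧ l.prod = w := by
  induction h : lengthB n w using Nat.strong_induction_on generalizing w with
  | _ m ih =>
  by_cases hne : w = 1
  · subst hne
    exact ⟨[], by rw [List.length_nil, ← h, lengthB_one], by simp, rfl⟩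
  obtain ⟨g, hg, hlen⟩ := exists_isSimpleReflection_lengthB_mul hn hw hne
  obtain ⟨l, hl, hgens, hprod⟩ := ih _ (by omega) (mul_mem_Wgrp hw (hg.mem_Wgrp hn)) rfl
  refine ⟨l ++ [g], by simp only [List.length_append, List.length_singleton]; omega, ?_, ?_⟩
  · simpa only [List.mem_append, List.mem_singleton, or_imp, forall_and, forall_eq]
      using ⟨hgens, hg⟩
  · rw [List.prod_append, List.prod_singleton, hprod, mul_assoc, hg.mul_self, mul_one]

lemma lengthB_prod_le_length (hn : 1 ≤ n) (l : List (Equiv.Perm ℤ))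
    (hl : ∀ g ∈ l, IsSimpleReflection n g) : l.prod ∈ Wgrp n ∧ lengthB n l.prod ≤ l.length := by
  induction l using List.reverseRecOn with
  | nil => exact ⟨⟨fun _ => rfl, fun _ _ => rfl⟩, by simp [lengthB_one]⟩
  | append_singleton l g ih =>
    obtain ⟨hmem, hlen⟩ := ih fun g' h => hl g' (List.mem_append_left _ h)
    have hg := hl g (by simp)
    rw [List.prod_append, List.prod_singleton, List.length_append, List.length_singleton]
    exact ⟨mul_mem_Wgrp hmem (hg.mem_Wgrp hn), (lengthB_mul_le hn hmem hg).trans (by omega)⟩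

lemma lenB_eq_lengthB (hn : 1 ≤ n) (hw : w ∈ Wgrp n) : lenB n w = lengthB n w := by
  have hmem : lengthB n w ∈ {k | ∃ l : List (Equiv.Perm ℤ), l.length = k ∧
      (∀ g ∈ l, IsSimpleReflection n g) ∧ l.prod = w} := exists_word_length_eq_lengthB hn hw
  refine le_antisymm (Nat.sInf_le hmem) ?_
  obtain ⟨l', hl', hgens', hprod'⟩ := Nat.sInf_mem ⟨_, hmem⟩
  change lengthB n w ≤ sInf {k | ∃ l : List (Equiv.Perm ℤ), l.length = k ∧
    (∀ g ∈ l, IsSimpleReflection n g) ∧ l.prod = w}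
  rw [← hl', ← hprod']
  exact (lengthB_prod_le_length hn l' hgens').2

end length

section descents

variable {n i : ℕ} {w : Equiv.Perm ℤ} (hw : w ∈ Wgrp n)
include hw

lemma inTauS_iff (hi : 1 ≤ i) (hin : i < n) : InTauS n i w ↔ w (i + 1) < w i := by
  rw [InTauS, lenB_eq_lengthB (by omega) (mul_mem_Wgrp hw (sgen_mem_Wgrp hi hin)),
    lenB_eq_lengthB (by omega) hw]
  rcases lt_or_gt_of_ne (w.injective.ne (by omega : (i : ℤ) ≠ i + 1)) with h | h
  · have := lengthB_mul_sgen_of_lt hi hin h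
    constructor <;> intro <;> omega
  · have := lengthB_mul_sgen_of_gt hi hin h
    constructor <;> intro <;> omega

lemma inTauT_iff (hi : 1 ≤ i) (hin : i ≤ n) : InTauT n i w ↔ w i < 0 := by
  have hwt := mul_mem_Wgrp hw (tgen_mem_Wgrp hin)
  rw [InTauT, lenB_eq_lengthB (by omega) hwt, lenB_eq_lengthB (by omega) hw]
  rcases lt_or_gt_of_ne (Wgrp_apply_ne_zero hw (by omega : (i : ℤ) ≠ 0)) with h | h
  · have := lengthB_lt_mul_tgen hwt hi hin (by rw [mul_tgen_apply_self hw]; omega)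
    rw [mul_assoc, tgen_mul_self, mul_one] at this
    simpa only [h, iff_true] using this
  · have := lengthB_lt_mul_tgen hw hi hin h
    constructor <;> intro <;> omega

end descents

theorem mem_D_SC_iff_general (n k : ℕ) (hk2 : k < n)
    (w : Equiv.Perm ℤ) (hw : w ∈ Wgrp n) :
    (∀ i : ℕ, 1 ≤ i → i ≤ k →
      ((¬ InTauS n i w ∧ InTauT n i w ∧
          ¬ InTauT n i (w * tgen i) ∧ InTauS n i (w * tgen i)) ∨
       (InTauS n i w ∧ ¬ InTauT n i w ∧
          ¬ InTauS n i (w * tgen i) ∧ InTauT n i (w * tgen i)))) ↔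
      (∀ i : ℕ, 1 ≤ i → i ≤ k → |w ((i : ℤ) + 1)| < |w (i : ℤ)|) := by
  refine forall_congr' fun i => imp_congr_right fun hi => imp_congr_right fun hik => ?_
  have hwt := mul_mem_Wgrp hw (tgen_mem_Wgrp (n := n) (i := i) (by omega))
  rw [inTauS_iff hw hi (by omega), inTauT_iff hw hi (by omega), inTauS_iff hwt hi (by omega),
    inTauT_iff hwt hi (by omega), mul_tgen_apply_self hw,
    mul_tgen_apply_of_ne w (by omega : (i : ℤ) + 1 ≠ i) (by omega)]
  have hne : w (i + 1) ≠ w i := w.injective.ne (by omega)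
  have hne' : w (i + 1) ≠ -w i := Wgrp_apply_ne_neg hw (by omega)
  rcases abs_cases (w (i + 1)) with ⟨h₁, _⟩ | ⟨h₁, _⟩ <;>
    rcases abs_cases (w i) with ⟨h₂, _⟩ | ⟨h₂, _⟩ <;> rw [h₁, h₂] <;> omega

/-- `w` lies in the domain `D^k_{SC}(W_n)` of `T^k_{SC}` — i.e. for every
`1 ≤ i ≤ k` there is a choice `{δ_i, β_i} = {α_{i+1}, α'_i}` with
`w ∈ D^k_{δ_i β_i}` and `w t_i ∈ D^k_{β_i δ_i}` — if and only if
`|w(1)| > |w(2)| > ⋯ > |w(k+1)|`. -/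
theorem mem_D_SC_iff (n k : ℕ) (hk1 : 1 ≤ k) (hk2 : k < n)
    (w : Equiv.Perm ℤ) (hw : w ∈ Wgrp n) :
    (∀ i : ℕ, 1 ≤ i → i ≤ k →
      ((¬ InTauS n i w ∧ InTauT n i w ∧
          ¬ InTauT n i (w * tgen i) ∧ InTauS n i (w * tgen i)) ∨
       (InTauS n i w ∧ ¬ InTauT n i w ∧
          ¬ InTauS n i (w * tgen i) ∧ InTauT n i (w * tgen i)))) ↔
      (∀ i : ℕ, 1 ≤ i → i ≤ k → |w ((i : ℤ) + 1)| < |w (i : ℤ)|) :=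
  mem_D_SC_iff_general n k hk2 w hw
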